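/- Over-approximation of the inflated QMI set (Proposition 4): if 𝐀 ≻ 0, 𝐐 := 𝐁ᵀ𝐀⁻¹𝐁 - 𝐂 ⪰ 0, and C(γ) is the set of matrices within operator-norm distance γ of 𝒞 = { Z : 𝐂 + 𝐁ᵀZ + Zᵀ𝐁 + Zᵀ𝐀Z ⪯ 0 }, then C(γ) ⊆ 𝒞̄ := { Z : 𝐂̄ + 𝐁ᵀZ + Zᵀ𝐁 + Zᵀ𝐀Z ⪯ 0 }, where 𝐂̄ = 𝐂 - (2γ‖𝐀^{1/2}‖‖𝐐^{1/2}‖ + γ²‖𝐀‖) Iₙ. -/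

import Mathlib

/-!
Completing the square gives `C + BᵀZ + ZᵀB + ZᵀAZ = (Z + A⁻¹B)ᵀ A (Z + A⁻¹B) - Q`, so writing
`A = SᵀS` and `Q = RᵀR` with the square roots `S`, `R`, the quadratic form of the left-hand side at
`x` is `‖S(Z + A⁻¹B)x‖² - ‖Rx‖²`. For `Z̄ ∈ 𝒞` the vector `w = S(Z̄ + A⁻¹B)x` then has
`‖w‖ ≤ ‖Rx‖ ≤ ‖R‖‖x‖`, and for `Z = Z̄ + Δ` with `‖Δ‖ ≤ γ`,
`‖w + SΔx‖² ≤ ‖w‖² + 2‖w‖‖SΔx‖ + ‖SΔx‖²` where `‖SΔx‖ ≤ ‖S‖γ‖x‖` and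
`‖SΔx‖² = (Δx)ᵀA(Δx) ≤ ‖A‖γ²‖x‖²`: the form at `Z` exceeds the one at `Z̄` by at most
`(2γ‖S‖‖R‖ + γ²‖A‖)‖x‖²`, which is what shifting `C` to `C̄` absorbs.
-/

open Matrix

/-- operator (induced 2-) norm of a real matrix -/
noncomputable def opNorm {m n : Type*} [Fintype m] [Fintype n] [DecidableEq n]
    (M : Matrix m n ℝ) : ℝ :=
  ‖LinearMap.toContinuousLinearMap (Matrix.toEuclideanLin M)‖

open scoped ComplexOrder in
/-- The positive semidefinite square root of a positive semidefinite matrix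
(the definition of `Matrix.PosSemidef.sqrt` in the older Mathlib, since removed) -/
noncomputable def Matrix.PosSemidef.sqrt {n : Type*} [Fintype n] [DecidableEq n] {𝕜 : Type*}
    [RCLike 𝕜] {A : Matrix n n 𝕜} (hA : Matrix.PosSemidef A) : Matrix n n 𝕜 :=
  hA.1.eigenvectorUnitary.1 * diagonal ((↑) ∘ (√·) ∘ hA.1.eigenvalues) *
  (star hA.1.eigenvectorUnitary : Matrix n n 𝕜)

open scoped ComplexOrder

namespace Matrix.PosSemidef

variable {n 𝕜 : Type*} [Fintype n] [DecidableEq n] [RCLike 𝕜] {A : Matrix n n 𝕜}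

lemma isHermitian_sqrt (hA : A.PosSemidef) : hA.sqrt.IsHermitian := by
  simp only [IsHermitian, Matrix.PosSemidef.sqrt, conjTranspose_mul, diagonal_conjTranspose,
    Matrix.star_eq_conjTranspose, conjTranspose_conjTranspose, Matrix.mul_assoc]
  congr 3
  funext i
  simp

lemma sqrt_mul_sqrt (hA : A.PosSemidef) : hA.sqrt * hA.sqrt = A := by
  set U := hA.1.eigenvectorUnitary
  have hU : (star U : Matrix n n 𝕜) * U = 1 := Unitary.star_mul_self_of_mem U.2
  conv_rhs => rw [hA.1.spectral_theorem]
  simp only [Matrix.PosSemidef.sqrt, Unitary.conjStarAlgAut_apply, Matrix.mul_assoc]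
  rw [← Matrix.mul_assoc (star U : Matrix n n 𝕜), hU, Matrix.one_mul,
    ← Matrix.mul_assoc (diagonal _), diagonal_mul_diagonal]
  congr 3
  funext i
  simp [← RCLike.ofReal_mul, Real.mul_self_sqrt (hA.eigenvalues_nonneg i)]

lemma transpose_sqrt_mul_sqrt {A : Matrix n n ℝ} (hA : A.PosSemidef) :
    hA.sqrtᵀ * hA.sqrt = A := by
  rw [← conjTranspose_eq_transpose_of_trivial, hA.isHermitian_sqrt.eq, hA.sqrt_mul_sqrt]

end Matrix.PosSemidef

open WithLp

section EuclideanNorm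

variable {m n : Type*} [Fintype m] [Fintype n]

lemma opNorm_nonneg [DecidableEq n] (M : Matrix m n ℝ) : 0 ≤ opNorm M := norm_nonneg _

lemma norm_toLp_mulVec_le [DecidableEq n] (M : Matrix m n ℝ) (x : n → ℝ) :
    ‖toLp 2 (M *ᵥ x)‖ ≤ opNorm M * ‖toLp 2 x‖ :=
  (LinearMap.toContinuousLinearMap (toEuclideanLin M)).le_opNorm (toLp 2 x)

lemma dotProduct_self_eq_norm_toLp_sq (x : n → ℝ) : x ⬝ᵥ x = ‖toLp 2 x‖ ^ 2 := by
  rw [← real_inner_self_eq_norm_sq, EuclideanSpace.inner_toLp_toLp, star_trivial]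

lemma dotProduct_transpose_mul_self_mulVec (N : Matrix m n ℝ) (x : n → ℝ) :
    x ⬝ᵥ ((Nᵀ * N) *ᵥ x) = ‖toLp 2 (N *ᵥ x)‖ ^ 2 := by
  rw [← mulVec_mulVec, dotProduct_mulVec, vecMul_transpose, dotProduct_self_eq_norm_toLp_sq]

lemma dotProduct_mulVec_le_opNorm_mul [DecidableEq n] (M : Matrix n n ℝ) (x : n → ℝ) :
    x ⬝ᵥ (M *ᵥ x) ≤ opNorm M * ‖toLp 2 x‖ ^ 2 :=
  calc x ⬝ᵥ (M *ᵥ x) = inner ℝ (toLp 2 x) (toLp 2 (M *ᵥ x)) := by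
        rw [EuclideanSpace.inner_toLp_toLp, star_trivial, dotProduct_comm]
    _ ≤ ‖toLp 2 x‖ * ‖toLp 2 (M *ᵥ x)‖ := real_inner_le_norm _ _
    _ ≤ ‖toLp 2 x‖ * (opNorm M * ‖toLp 2 x‖) := by
        gcongr; exact norm_toLp_mulVec_le M x
    _ = opNorm M * ‖toLp 2 x‖ ^ 2 := by ring

end EuclideanNorm

section QMI

variable {R p n : Type*} [Fintype p]

def qmi [CommRing R] (A : Matrix p p R) (B : Matrix p n R) (C : Matrix n n R) (Z : Matrix p n R) :
    Matrix n n R :=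
  C + Bᵀ * Z + Zᵀ * B + Zᵀ * A * Z

lemma isSymm_qmi [CommRing R] {A : Matrix p p R} {C : Matrix n n R} (hA : A.IsSymm)
    (hC : C.IsSymm) (B Z : Matrix p n R) : (qmi A B C Z).IsSymm := by
  rw [IsSymm, qmi]
  simp only [transpose_add, transpose_mul, transpose_transpose, hA.eq, hC.eq, Matrix.mul_assoc]
  abel

lemma qmi_eq_completeSquare [DecidableEq p] [CommRing R] {A : Matrix p p R} (hA : A.IsSymm)
    (hdet : IsUnit A.det) (B Z : Matrix p n R) (C : Matrix n n R) :
    qmi A B C Z = (Z + A⁻¹ * B)ᵀ * A * (Z + A⁻¹ * B) - (Bᵀ * A⁻¹ * B - C) := by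
  have hAinv : A⁻¹ᵀ = A⁻¹ := by rw [transpose_nonsing_inv, hA.eq]
  simp only [qmi, transpose_add, transpose_mul, hAinv, Matrix.add_mul, Matrix.mul_add,
    Matrix.mul_assoc, mul_nonsing_inv_cancel_left A _ hdet,
    nonsing_inv_mul_cancel_left A _ hdet]
  abel

end QMI

section Perturbation

variable {p n : Type*} [Fintype p] [DecidableEq p] [Fintype n]
  {A S : Matrix p p ℝ} {B : Matrix p n ℝ} {C R : Matrix n n ℝ}

lemma dotProduct_qmi_mulVec (hS : Sᵀ * S = A) (hR : Rᵀ * R = Bᵀ * A⁻¹ * B - C)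
    (hdet : IsUnit A.det) (Z : Matrix p n ℝ) (x : n → ℝ) :
    x ⬝ᵥ (qmi A B C Z *ᵥ x) =
      ‖toLp 2 (S *ᵥ ((Z + A⁻¹ * B) *ᵥ x))‖ ^ 2 - ‖toLp 2 (R *ᵥ x)‖ ^ 2 := by
  have hA : A.IsSymm := hS ▸ isSymm_transpose_mul_self S
  have hSY : ∀ Y : Matrix p n ℝ, Yᵀ * A * Y = (S * Y)ᵀ * (S * Y) := fun Y => by
    rw [← hS, transpose_mul, Matrix.mul_assoc, Matrix.mul_assoc, Matrix.mul_assoc]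
  rw [qmi_eq_completeSquare hA hdet, ← hR, hSY, sub_mulVec, dotProduct_sub,
    dotProduct_transpose_mul_self_mulVec, dotProduct_transpose_mul_self_mulVec, mulVec_mulVec]

lemma dotProduct_qmi_mulVec_le_of_opNorm_sub_le [DecidableEq n] (hS : Sᵀ * S = A)
    (hR : Rᵀ * R = Bᵀ * A⁻¹ * B - C) (hdet : IsUnit A.det) {Z Zbar : Matrix p n ℝ} {γ : ℝ}
    (hZ : opNorm (Z - Zbar) ≤ γ) (x : n → ℝ) (hZbar : x ⬝ᵥ (qmi A B C Zbar *ᵥ x) ≤ 0) :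
    x ⬝ᵥ (qmi A B C Z *ᵥ x) ≤
      (2 * γ * opNorm S * opNorm R + γ ^ 2 * opNorm A) * ‖toLp 2 x‖ ^ 2 := by
  set u := (Zbar + A⁻¹ * B) *ᵥ x
  set δ := (Z - Zbar) *ᵥ x
  have hsplit : S *ᵥ ((Z + A⁻¹ * B) *ᵥ x) = S *ᵥ u + S *ᵥ δ := by
    rw [← mulVec_add, ← add_mulVec, add_right_comm, add_sub_cancel]
  rw [dotProduct_qmi_mulVec hS hR hdet] at hZbar ⊢
  rw [hsplit]
  have hu : ‖toLp 2 (S *ᵥ u)‖ ≤ opNorm R * ‖toLp 2 x‖ :=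
    (pow_le_pow_iff_left₀ (norm_nonneg _) (norm_nonneg _) two_ne_zero).1 (by linarith)
      |>.trans (norm_toLp_mulVec_le R x)
  have hδ : ‖toLp 2 δ‖ ≤ γ * ‖toLp 2 x‖ :=
    (norm_toLp_mulVec_le _ x).trans (by gcongr)
  have hSδ : ‖toLp 2 (S *ᵥ δ)‖ ≤ opNorm S * (γ * ‖toLp 2 x‖) :=
    (norm_toLp_mulVec_le S δ).trans (by gcongr; exact opNorm_nonneg S)
  have hSδ_sq : ‖toLp 2 (S *ᵥ δ)‖ ^ 2 ≤ opNorm A * (γ * ‖toLp 2 x‖) ^ 2 := by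
    rw [← dotProduct_transpose_mul_self_mulVec, hS]
    exact (dotProduct_mulVec_le_opNorm_mul A δ).trans (by gcongr; exact opNorm_nonneg A)
  calc ‖toLp 2 (S *ᵥ u + S *ᵥ δ)‖ ^ 2 - ‖toLp 2 (R *ᵥ x)‖ ^ 2
      ≤ (‖toLp 2 (S *ᵥ u)‖ + ‖toLp 2 (S *ᵥ δ)‖) ^ 2 - ‖toLp 2 (R *ᵥ x)‖ ^ 2 := by
        gcongr; rw [WithLp.toLp_add]; exact norm_add_le _ _
    _ ≤ 2 * (opNorm R * ‖toLp 2 x‖) * (opNorm S * (γ * ‖toLp 2 x‖))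
          + opNorm A * (γ * ‖toLp 2 x‖) ^ 2 := by
        nlinarith [norm_nonneg (toLp 2 (S *ᵥ u)), norm_nonneg (toLp 2 (S *ᵥ δ))]
    _ = (2 * γ * opNorm S * opNorm R + γ ^ 2 * opNorm A) * ‖toLp 2 x‖ ^ 2 := by ring

end Perturbation

theorem stmt_4_general (p n : ℕ) (A : Matrix (Fin p) (Fin p) ℝ) (B : Matrix (Fin p) (Fin n) ℝ)
    (C : Matrix (Fin n) (Fin n) ℝ) (hA : A.PosDef) (hC : C.IsSymm)
    (hQ : (Bᵀ * A⁻¹ * B - C).PosSemidef) (γ : ℝ) :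
    {Z : Matrix (Fin p) (Fin n) ℝ |
        ∃ Zbar : Matrix (Fin p) (Fin n) ℝ,
          (-(C + Bᵀ * Zbar + Zbarᵀ * B + Zbarᵀ * A * Zbar)).PosSemidef ∧
            opNorm (Z - Zbar) ≤ γ} ⊆
      {Z : Matrix (Fin p) (Fin n) ℝ |
        (-((C - (2 * γ * opNorm hA.posSemidef.sqrt * opNorm hQ.sqrt + γ ^ 2 * opNorm A) •
              (1 : Matrix (Fin n) (Fin n) ℝ)) + Bᵀ * Z + Zᵀ * B + Zᵀ * A * Z)).PosSemidef} := by
  rintro Z ⟨Zbar, hZbar, hZ⟩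
  set c := 2 * γ * opNorm hA.posSemidef.sqrt * opNorm hQ.sqrt + γ ^ 2 * opNorm A
  have hdet : IsUnit A.det := hA.det_pos.ne'.isUnit
  have hdiff : -(C - c • 1 + Bᵀ * Z + Zᵀ * B + Zᵀ * A * Z) = c • 1 - qmi A B C Z := by
    rw [qmi]; abel
  rw [Set.mem_ofPred_eq, hdiff]
  refine PosSemidef.of_dotProduct_mulVec_nonneg ?_ fun x => ?_
  · exact isHermitian_iff_isSymm.2
      ((isSymm_one.smul c).sub (isSymm_qmi (isHermitian_iff_isSymm.1 hA.1) hC B Z))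
  · have hZbar_x : x ⬝ᵥ (qmi A B C Zbar *ᵥ x) ≤ 0 := by
      have := hZbar.dotProduct_mulVec_nonneg x
      rwa [star_trivial, neg_mulVec, dotProduct_neg, neg_nonneg] at this
    have hZ_x := dotProduct_qmi_mulVec_le_of_opNorm_sub_le hA.posSemidef.transpose_sqrt_mul_sqrt
      hQ.transpose_sqrt_mul_sqrt hdet hZ x hZbar_x
    rw [star_trivial, sub_mulVec, dotProduct_sub, smul_mulVec, one_mulVec, dotProduct_smul,
      dotProduct_self_eq_norm_toLp_sq, smul_eq_mul]
    linarith

/-- Proposition 4: over-approximation C(γ) ⊆ 𝒞̄, where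
𝐂̄ = 𝐂 - (2γ‖𝐀^{1/2}‖‖𝐐^{1/2}‖ + γ²‖𝐀‖) Iₙ. -/
theorem stmt_4 (p n : ℕ) (A : Matrix (Fin p) (Fin p) ℝ) (B : Matrix (Fin p) (Fin n) ℝ)
    (C : Matrix (Fin n) (Fin n) ℝ) (hA : A.PosDef) (hC : C.IsSymm)
    (hQ : (Bᵀ * A⁻¹ * B - C).PosSemidef) (γ : ℝ) (hγ : 0 ≤ γ) :
    {Z : Matrix (Fin p) (Fin n) ℝ |
        ∃ Zbar : Matrix (Fin p) (Fin n) ℝ,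
          (-(C + Bᵀ * Zbar + Zbarᵀ * B + Zbarᵀ * A * Zbar)).PosSemidef ∧
            opNorm (Z - Zbar) ≤ γ} ⊆
      {Z : Matrix (Fin p) (Fin n) ℝ |
        (-((C - (2 * γ * opNorm hA.posSemidef.sqrt * opNorm hQ.sqrt + γ ^ 2 * opNorm A) •
              (1 : Matrix (Fin n) (Fin n) ℝ)) + Bᵀ * Z + Zᵀ * B + Zᵀ * A * Z)).PosSemidef} :=
  stmt_4_general p n A B C hA hC hQ γ
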